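/- Let S be an alignment on a taxon set X that is homoplasy-free on a binary phylogenetic X-tree T. Then for every subset Y ⊆ X with 2 ≤ |Y|, the restriction T|_Y is an MP tree for S|_Y, i.e. l_{T|_Y}(S|_Y) ≤ l_{T'}(S|_Y) for every binary phylogenetic Y-tree T'. In particular, for each k = 4,…,|X|−1 there exists a subset Y ⊆ X with |Y| = k such that T|_Y is an MP tree for S|_Y. -/

import Mathlib

/-!
Basic definitions for Maximum Parsimony / Maximum Likelihood phylogenetics.

A *binary phylogenetic X-tree* is a finite simple graph that is a tree (connected
and acyclic) whose degree-1 vertices are exactly the (images of the) taxa in `X`,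
all other vertices having degree 3.
-/

/-- The number of edges of the graph `G` on which the vertex labeling `g` changes state
(i.e. edges `{u,v}` with `g u ≠ g v`). -/
noncomputable def changedEdges {V C : Type} (G : SimpleGraph V) (g : V → C) : ℕ :=
  {e ∈ G.edgeSet | ¬ (Sym2.map g e).IsDiag}.ncard

/-- The parsimony score of a character `f : X → C` on the graph `G`, whose taxa are
embedded via `ι : X → V`: the minimum number of change-edges over all extensions
`g : V → C` of `f`. -/
noncomputable def gScore {V X C : Type} (G : SimpleGraph V) (ι : X → V) (f : X → C) : ℕ :=
  sInf { n : ℕ | ∃ g : V → C, (∀ x, g (ι x) = f x) ∧ n = changedEdges G g }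

/-- The parsimony score of an alignment (finite sequence of characters). -/
noncomputable def gScoreA {V X C : Type} (G : SimpleGraph V) (ι : X → V)
    (S : List (X → C)) : ℕ :=
  (S.map (gScore G ι)).sum

/-- A binary phylogenetic `X`-tree: a finite simple graph which is a tree (connected and
acyclic), with an injective embedding `ι` of the taxon set `X` as its vertices of degree 1,
every vertex not in the image of `ι` having degree 3. -/
structure PhyloTree (X : Type) : Type 1 where
  V : Type
  G : SimpleGraph V
  ι : X → V
  finV : Finite V
  inj : Function.Injective ι
  conn : G.Connected
  acyc : G.IsAcyclic
  leafDeg : ∀ x : X, (G.neighborSet (ι x)).ncard = 1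
  innerDeg : ∀ v : V, v ∉ Set.range ι → (G.neighborSet v).ncard = 3

namespace PhyloTree

variable {X C : Type}

/-- Parsimony score `l_T(f)` of a character on a binary phylogenetic tree. -/
noncomputable def score (T : PhyloTree X) (f : X → C) : ℕ := gScore T.G T.ι f

/-- Parsimony score `l_T(S)` of an alignment on a binary phylogenetic tree. -/
noncomputable def scoreA (T : PhyloTree X) (S : List (X → C)) : ℕ := gScoreA T.G T.ι S

/-- The set of vertices of `T` lying on a path between two taxa of `Y`. -/
def span (T : PhyloTree X) (Y : Set X) : Set T.V :=
  {v | ∃ x ∈ Y, ∃ y ∈ Y, ∃ p : T.G.Walk (T.ι x) (T.ι y), p.IsPath ∧ v ∈ p.support}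

lemma ι_mem_span (T : PhyloTree X) {Y : Set X} {y : X} (hy : y ∈ Y) : T.ι y ∈ T.span Y :=
  ⟨y, hy, y, hy, SimpleGraph.Walk.nil, SimpleGraph.Walk.IsPath.nil,
    SimpleGraph.Walk.start_mem_support _⟩

/-- Parsimony score of the restricted character `f|_Y` on the restricted tree `T|_Y`
(the subgraph of `T` induced on the set of vertices lying on paths between taxa of `Y`). -/
noncomputable def restScore (T : PhyloTree X) (Y : Set X) (f : X → C) : ℕ :=
  gScore (T.G.induce (T.span Y)) (fun y : Y => ⟨T.ι y, T.ι_mem_span y.2⟩) (fun y : Y => f y)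

/-- Parsimony score of the restricted alignment `S|_Y` on the restricted tree `T|_Y`. -/
noncomputable def restScoreA (T : PhyloTree X) (Y : Set X) (S : List (X → C)) : ℕ :=
  (S.map (T.restScore Y)).sum

end PhyloTree

/-- The restriction `S|_Y` of an alignment to a subset `Y` of the taxa. -/
def subAl {X C : Type} (Y : Set X) (S : List (X → C)) : List (↥Y → C) :=
  S.map fun f y => f y.1

/-- Two binary phylogenetic `X`-trees are isomorphic as `X`-trees if there is a graph
isomorphism between them fixing every taxon. -/
def PhyloIso {X : Type} (T T' : PhyloTree X) : Prop :=
  ∃ e : T.G ≃g T'.G, ∀ x, e (T.ι x) = T'.ι x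

/-- `T` is a maximum parsimony (MP) tree for the alignment `S`. -/
def PhyloTree.IsMP {X C : Type} (T : PhyloTree X) (S : List (X → C)) : Prop :=
  ∀ T' : PhyloTree X, T.scoreA S ≤ T'.scoreA S

/-- `T` is the unique maximum parsimony tree for `S`: it is an MP tree and every tree not
isomorphic to it (fixing the taxa) has strictly larger parsimony score. -/
def PhyloTree.IsUniqueMP {X C : Type} (T : PhyloTree X) (S : List (X → C)) : Prop :=
  T.IsMP S ∧ ∀ T' : PhyloTree X, ¬ PhyloIso T T' → T.scoreA S < T'.scoreA S

/-- The caterpillar tree `((i,j),k,(l,m))` on five taxa: there are internal vertices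
`a, c, b` with edges `{i,a},{j,a},{a,c},{k,c},{c,b},{l,b},{m,b}`. -/
def PhyloTree.Cat5 (T : PhyloTree (Fin 5)) (i j k l m : Fin 5) : Prop :=
  ∃ a c b : T.V, T.G.Adj (T.ι i) a ∧ T.G.Adj (T.ι j) a ∧ T.G.Adj a c ∧
    T.G.Adj (T.ι k) c ∧ T.G.Adj c b ∧ T.G.Adj (T.ι l) b ∧ T.G.Adj (T.ι m) b

/-- The caterpillar tree `(((i,j),k),(l,(m,n)))` on six taxa: internal vertices `a,b,c,d`
with edges `{i,a},{j,a},{a,b},{k,b},{b,c},{l,c},{c,d},{m,d},{n,d}`. -/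
def PhyloTree.Cat6 (T : PhyloTree (Fin 6)) (i j k l m n : Fin 6) : Prop :=
  ∃ a b c d : T.V, T.G.Adj (T.ι i) a ∧ T.G.Adj (T.ι j) a ∧ T.G.Adj a b ∧
    T.G.Adj (T.ι k) b ∧ T.G.Adj b c ∧ T.G.Adj (T.ι l) c ∧ T.G.Adj c d ∧
    T.G.Adj (T.ι m) d ∧ T.G.Adj (T.ι n) d

/-- The quartet tree `((x₁,x₂),(x₃,x₄))`: internal vertices `u,v` with edges
`{x₁,u},{x₂,u},{u,v},{x₃,v},{x₄,v}`. -/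
def PhyloTree.Cherries {X : Type} (T : PhyloTree X) (x₁ x₂ x₃ x₄ : X) : Prop :=
  ∃ u v : T.V, T.G.Adj (T.ι x₁) u ∧ T.G.Adj (T.ι x₂) u ∧ T.G.Adj u v ∧
    T.G.Adj (T.ι x₃) v ∧ T.G.Adj (T.ι x₄) v

/-- The tree `T` displays the quartet split `x₁x₂ | x₃x₄`: the path from `x₁` to `x₂`
is vertex-disjoint from the path from `x₃` to `x₄`. (For a quartet tree on the four
taxa `x₁,…,x₄` this says exactly that its cherries are `{x₁,x₂}` and `{x₃,x₄}`;
for a larger tree it says that the restriction of `T` to `{x₁,x₂,x₃,x₄}`, with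
degree-2 vertices suppressed, is the quartet tree `((x₁,x₂),(x₃,x₄))`.) -/
def PhyloTree.Split {X : Type} (T : PhyloTree X) (x₁ x₂ x₃ x₄ : X) : Prop :=
  ∃ (p : T.G.Walk (T.ι x₁) (T.ι x₂)) (q : T.G.Walk (T.ι x₃) (T.ι x₄)),
    p.IsPath ∧ q.IsPath ∧ ∀ v, v ∈ p.support → v ∉ q.support

/-- A quartet tree `Q` on a four-element subset `Y ⊆ X` is compatible with the
`X`-tree `T` if the partition of `Y` into the two cherries of `Q` agrees with the
quartet split displayed by `T` on `Y`. -/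
def QuartetCompat {X : Type} {Y : Set X} (Q : PhyloTree ↥Y) (T : PhyloTree X) : Prop :=
  ∃ y₁ y₂ y₃ y₄ : ↥Y, y₁ ≠ y₂ ∧ y₁ ≠ y₃ ∧ y₁ ≠ y₄ ∧ y₂ ≠ y₃ ∧ y₂ ≠ y₄ ∧ y₃ ≠ y₄ ∧
    ({y₁, y₂, y₃, y₄} : Set ↥Y) = Set.univ ∧
    Q.Cherries y₁ y₂ y₃ y₄ ∧ T.Split y₁.1 y₂.1 y₃.1 y₄.1

/-- The binary phylogenetic `Y`-tree `Q` is (up to isomorphism) the tree `T‖_Y` obtained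
from `T|_Y` by suppressing its degree-2 vertices: equivalently (binary trees being
determined by their quartet splits), `Q` displays exactly the quartet splits of `T`
on taxa from `Y`. -/
def DisplaysRestriction {X : Type} (Y : Set X) (Q : PhyloTree ↥Y) (T : PhyloTree X) : Prop :=
  ∀ y₁ y₂ y₃ y₄ : ↥Y, (Q.Split y₁ y₂ y₃ y₄ ↔ T.Split y₁.1 y₂.1 y₃.1 y₄.1)

/-- The likelihood `P(f | G, p)` of a character `f` under the fully symmetric `N_r`-model
on the graph `G` (taxa embedded via `ι`) with substitution probabilities `p` on the edges:
`(1/r) · Σ_g Π_{e ∈ E(G)} w_e(g)`, summed over all extensions `g` of `f`, where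
`w_e(g) = p e` if `g` changes state along `e` and `w_e(g) = 1 - (r-1) p e` otherwise. -/
noncomputable def charLik {V X C : Type} [DecidableEq C] (r : ℕ) (G : SimpleGraph V)
    (ι : X → V) (f : X → C) (p : Sym2 V → ℝ) : ℝ :=
  (1 / (r : ℝ)) * ∑ᶠ g ∈ {g : V → C | ∀ x, g (ι x) = f x},
    ∏ᶠ e ∈ G.edgeSet, (if (Sym2.map g e).IsDiag then 1 - ((r : ℝ) - 1) * p e else p e)

/-- `max P(f|T)`: the supremum of the likelihood of the character `f` on the binary
phylogenetic tree `T` under the `N_r`-model, over all edge parameters `0 ≤ p e ≤ 1/r`. -/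
noncomputable def PhyloTree.maxLik {X C : Type} [DecidableEq C] (T : PhyloTree X) (r : ℕ)
    (f : X → C) : ℝ :=
  sSup { L : ℝ | ∃ p : Sym2 T.V → ℝ,
    (∀ e ∈ T.G.edgeSet, 0 ≤ p e ∧ p e ≤ 1 / (r : ℝ)) ∧ L = charLik r T.G T.ι f p }

/-- `max P(S|T)` under the `N_r`-model with *no common mechanism*: the product over the
characters of the alignment of their individually maximized likelihoods. -/
noncomputable def PhyloTree.maxLikA {X C : Type} [DecidableEq C] (T : PhyloTree X) (r : ℕ)
    (S : List (X → C)) : ℝ :=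
  (S.map (T.maxLik r)).prod

/-- `T` is a maximum likelihood (ML) tree for `S` under the `N_r`-model with no common
mechanism. -/
def PhyloTree.IsML {X C : Type} [DecidableEq C] (T : PhyloTree X) (r : ℕ)
    (S : List (X → C)) : Prop :=
  ∀ T' : PhyloTree X, T'.maxLikA r S ≤ T.maxLikA r S

/-- `T` is the unique ML tree for `S` under the `N_r`-model with no common mechanism. -/
def PhyloTree.IsUniqueML {X C : Type} [DecidableEq C] (T : PhyloTree X) (r : ℕ)
    (S : List (X → C)) : Prop :=
  T.IsML r S ∧ ∀ T' : PhyloTree X, ¬ PhyloIso T T' → T'.maxLikA r S < T.maxLikA r S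

/-! Merging the colour classes across one changed edge removes at least that edge from the
change set, so repeatedly merging every colour outside a palette `P` into a neighbouring class
costs one changed edge per discarded colour. Applied to an optimal extension of a
homoplasy-free character on `T`, with `P` the states seen on `Y`, and restricted to `T|_Y`,
this gives `l_{T|_Y}(f|_Y) ≤ |f(Y)| - 1`; the same merging, down to a single colour, shows
that every extension of `f|_Y` to any connected graph has at least `|f(Y)| - 1` changes. -/

open SimpleGraph

section Recolouring

variable {V W X C : Type} {G : SimpleGraph V}

lemma mk_mem_changedEdgesSet {g : V → C} {u v : V} :
    s(u, v) ∈ {e ∈ G.edgeSet | ¬ (Sym2.map g e).IsDiag} ↔ G.Adj u v ∧ g u ≠ g v := by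
  simp [Sym2.mk_isDiag_iff]

lemma changedEdges_comp_embedding_le [Finite W] {H : SimpleGraph W} (φ : G ↪g H) (g : W → C) :
    changedEdges G (g ∘ φ) ≤ changedEdges H g := by
  refine Set.ncard_le_ncard_of_injOn (Sym2.map φ) ?_ (Sym2.map.injective φ.injective).injOn
  rintro e ⟨he, hdiag⟩
  exact ⟨φ.toHom.map_mem_edgeSet he, by rwa [Sym2.map_map]⟩

open Classical in
lemma changedEdges_merge_lt [Finite V] {g : V → C} {u v : V} (huv : G.Adj u v)
    (hne : g u ≠ g v) :
    changedEdges G (fun z => if g z = g u then g v else g z) < changedEdges G g := by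
  refine Set.ncard_lt_ncard ⟨fun e he => ?_, fun hsub => ?_⟩
  · induction e using Sym2.ind with
    | _ p q =>
      rw [mk_mem_changedEdgesSet] at he ⊢
      exact ⟨he.1, fun h => he.2 (by simp only [h])⟩
  · have := (mk_mem_changedEdgesSet.1 (hsub (mk_mem_changedEdgesSet.2 ⟨huv, hne⟩))).2
    simp [hne.symm] at this

lemma SimpleGraph.Connected.exists_recolour_changedEdges_add_ncard_le [Finite V]
    (hG : G.Connected) (P : Set C) (g : V → C) (hP : ∃ v, g v ∈ P) :
    ∃ g' : V → C, (∀ v, g v ∈ P → g' v = g v) ∧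
      changedEdges G g' + (Set.range g \ P).ncard ≤ changedEdges G g := by
  classical
  induction hn : changedEdges G g using Nat.strong_induction_on generalizing g with
  | _ n ih =>
    subst hn
    by_cases hsub : Set.range g ⊆ P
    · exact ⟨g, fun _ _ => rfl, by simp [Set.sdiff_eq_empty.2 hsub]⟩
    obtain ⟨_, ⟨z, rfl⟩, hzP⟩ := Set.not_subset.1 hsub
    obtain ⟨v, hv⟩ := hP
    obtain ⟨d, -, hd₁, hd₂⟩ := (hG.preconnected z v).some.exists_boundary_dart
      {w | g w = g z} rfl (fun h => hzP (h ▸ hv))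
    replace hd₁ : g d.fst = g z := hd₁
    replace hd₂ : g d.snd ≠ g z := hd₂
    have hne : g d.fst ≠ g d.snd := fun h => hd₂ (h ▸ hd₁)
    set g₁ : V → C := fun w => if g w = g d.fst then g d.snd else g w
    have hkeep : ∀ w, g w ∈ P → g₁ w = g w := fun w hw =>
      if_neg fun h => hzP (by rwa [← hd₁, ← h])
    have hlt := changedEdges_merge_lt d.adj hne
    obtain ⟨g', hg', hle⟩ := ih _ hlt g₁ ⟨v, (hkeep v hv).symm ▸ hv⟩ rfl
    refine ⟨g', fun w hw => (hg' w ((hkeep w hw).symm ▸ hw)).trans (hkeep w hw), ?_⟩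
    have hrange : Set.range g \ P ⊆ insert (g z) (Set.range g₁ \ P) := by
      rintro _ ⟨⟨w, rfl⟩, hwP⟩
      by_cases hw : g w = g z
      · exact Or.inl hw
      · exact Or.inr ⟨⟨w, if_neg (hd₁ ▸ hw)⟩, hwP⟩
    have := (Set.ncard_le_ncard hrange).trans (Set.ncard_insert_le _ _)
    omega

lemma SimpleGraph.Connected.ncard_range_le_changedEdges_add_one [Finite V] (hG : G.Connected)
    (g : V → C) :
    (Set.range g).ncard ≤ changedEdges G g + 1 := by
  obtain ⟨v⟩ := hG.nonempty
  obtain ⟨g', -, hle⟩ := hG.exists_recolour_changedEdges_add_ncard_le {g v} g ⟨v, rfl⟩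
  have := Set.ncard_le_ncard_sdiff_add_ncard (Set.range g) {g v}
  rw [Set.ncard_singleton] at this
  omega

lemma gScore_le_changedEdges {ι : X → V} {f : X → C} {g : V → C}
    (hg : ∀ x, g (ι x) = f x) : gScore G ι f ≤ changedEdges G g :=
  Nat.sInf_le ⟨g, hg, rfl⟩

lemma exists_changedEdges_eq_gScore [Nonempty C] {ι : X → V} (hι : Function.Injective ι)
    (f : X → C) :
    ∃ g : V → C, (∀ x, g (ι x) = f x) ∧ changedEdges G g = gScore G ι f := by
  let g₀ := Function.extend ι f fun _ => Classical.arbitrary C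
  obtain ⟨g, hg, hval⟩ := Nat.sInf_mem
    (⟨_, g₀, hι.extend_apply f _, rfl⟩ : {n | ∃ g : V → C, (∀ x, g (ι x) = f x) ∧
      n = changedEdges G g}.Nonempty)
  exact ⟨g, hg, hval.symm⟩

lemma SimpleGraph.Connected.ncard_range_le_gScore_add_one [Finite V] [Nonempty C]
    (hG : G.Connected) {ι : X → V} (hι : Function.Injective ι) (f : X → C) :
    (Set.range f).ncard ≤ gScore G ι f + 1 := by
  obtain ⟨g, hg, hval⟩ := exists_changedEdges_eq_gScore (G := G) hι f
  have hsub : Set.range f ⊆ Set.range g := by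
    rintro _ ⟨x, rfl⟩
    exact ⟨ι x, hg x⟩
  calc (Set.range f).ncard ≤ (Set.range g).ncard := Set.ncard_le_ncard hsub
    _ ≤ gScore G ι f + 1 := hval ▸ hG.ncard_range_le_changedEdges_add_one g

end Recolouring

namespace PhyloTree

variable {X C : Type}

lemma restScore_add_ncard_range_le (T : PhyloTree X) {Y : Set X} (hY : Y.Nonempty)
    (f : X → C) :
    T.restScore Y f + (Set.range f).ncard ≤ T.score f + (f '' Y).ncard := by
  have := T.finV
  have : Finite X := .of_injective T.ι T.inj
  obtain ⟨y₀, hy₀⟩ := hY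
  have : Nonempty C := ⟨f y₀⟩
  obtain ⟨g, hg, hval⟩ := exists_changedEdges_eq_gScore (G := T.G) T.inj f
  obtain ⟨g', hg', hle⟩ := T.conn.exists_recolour_changedEdges_add_ncard_le (f '' Y) g
    ⟨T.ι y₀, (hg y₀).symm ▸ Set.mem_image_of_mem f hy₀⟩
  have hext (y : Y) : g' (T.ι y) = f y :=
    (hg' _ ((hg y).symm ▸ Set.mem_image_of_mem f y.2)).trans (hg y)
  have hrest : T.restScore Y f ≤ changedEdges T.G g' :=
    (gScore_le_changedEdges (g := g' ∘ Subtype.val) hext).trans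
      (changedEdges_comp_embedding_le (Embedding.induce (T.span Y)) g')
  have hrange : (Set.range f).ncard ≤ (Set.range g).ncard :=
    Set.ncard_le_ncard (Set.range_subset_iff.2 fun x => ⟨T.ι x, hg x⟩)
  have := Set.ncard_le_ncard_sdiff_add_ncard (Set.range g) (f '' Y)
  rw [score, ← hval]
  omega

lemma restScore_le_score_of_homoplasyFree (T : PhyloTree X) {Y : Set X} (hY : Y.Nonempty)
    (T' : PhyloTree Y) {f : X → C} (hf : T.score f = (Set.range f).ncard - 1) :
    T.restScore Y f ≤ T'.score fun y => f y := by
  have := T.finV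
  have := T'.finV
  have : Finite X := .of_injective T.ι T.inj
  obtain ⟨y₀, hy₀⟩ := hY
  have : Nonempty C := ⟨f y₀⟩
  have hupper := T.restScore_add_ncard_range_le ⟨y₀, hy₀⟩ f
  have hlower := T'.conn.ncard_range_le_gScore_add_one T'.inj fun y : Y => f y
  rw [← Set.image_eq_range] at hlower
  have hpos : 0 < (Set.range f).ncard := (Set.ncard_pos).2 ⟨f y₀, y₀, rfl⟩
  rw [score]
  omega

end PhyloTree

theorem homoplasyFree_hereditary_general {X C : Type} (T : PhyloTree X)
    (S : List (X → C)) (hS : ∀ f ∈ S, T.score f = (Set.range f).ncard - 1) :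
    (∀ Y : Set X, 2 ≤ Y.ncard →
      ∀ T' : PhyloTree ↥Y, T.restScoreA Y S ≤ T'.scoreA (subAl Y S)) ∧
    (∀ k : ℕ, 4 ≤ k → k ≤ Nat.card X - 1 → ∃ Y : Set X, Y.ncard = k ∧
      ∀ T' : PhyloTree ↥Y, T.restScoreA Y S ≤ T'.scoreA (subAl Y S)) := by
  have hMP (Y : Set X) (hY : 2 ≤ Y.ncard) (T' : PhyloTree Y) :
      T.restScoreA Y S ≤ T'.scoreA (subAl Y S) := by
    have hYne : Y.Nonempty := Set.nonempty_of_ncard_ne_zero (by omega)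
    simp only [PhyloTree.restScoreA, PhyloTree.scoreA, gScoreA, subAl, List.map_map]
    exact List.sum_le_sum fun f hf => T.restScore_le_score_of_homoplasyFree hYne T' (hS f hf)
  refine ⟨hMP, fun k hk hkX => ?_⟩
  have := T.finV
  have : Finite X := .of_injective T.ι T.inj
  obtain ⟨Y, -, hYk⟩ := Set.exists_subset_card_eq (s := Set.univ) (n := k)
    (by rw [Set.ncard_univ X]; omega)
  exact ⟨Y, hYk, hMP Y (by omega)⟩

/-- If the alignment `S` is homoplasy-free on the binary phylogenetic
`X`-tree `T` (every character satisfies `l_T(f) = |f(X)| - 1`), then for every subset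
`Y ⊆ X` with `|Y| ≥ 2` the restriction `T|_Y` is an MP tree for `S|_Y`; in particular,
for each `k` with `4 ≤ k ≤ |X| - 1` there exists a `k`-element subset `Y ⊆ X` such that
`T|_Y` is an MP tree for `S|_Y`. -/
theorem homoplasyFree_hereditary {X C : Type} [Finite C] (T : PhyloTree X)
    (S : List (X → C)) (hS : ∀ f ∈ S, T.score f = (Set.range f).ncard - 1) :
    (∀ Y : Set X, 2 ≤ Y.ncard →
      ∀ T' : PhyloTree ↥Y, T.restScoreA Y S ≤ T'.scoreA (subAl Y S)) ∧
    (∀ k : ℕ, 4 ≤ k → k ≤ Nat.card X - 1 → ∃ Y : Set X, Y.ncard = k ∧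
      ∀ T' : PhyloTree ↥Y, T.restScoreA Y S ≤ T'.scoreA (subAl Y S)) :=
  homoplasyFree_hereditary_general T S hS
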